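/- For every integer n ≥ 2, the set I = A^+(B_n)_n ∪ {ξ_(i,i) : i ∈ [n]} (all n-support elements of A^+(B_n) together with the constant maps ξ_(i,i)) is an independent subset of A^+(B_n). Consequently, the upper rank satisfies r4(A^+(B_n)) ≥ (n!)·n² + n. -/

import Mathlib

/-- The Brandt semigroup `B_n`, modeled as `Option (Fin n × Fin n)` where
`none` plays the role of the (two-sided) zero element `ϑ`. -/
def Brandt (n : ℕ) : Type := Option (Fin n × Fin n)

instance (n : ℕ) : DecidableEq (Brandt n) :=
  inferInstanceAs (DecidableEq (Option (Fin n × Fin n)))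

instance (n : ℕ) : Fintype (Brandt n) :=
  inferInstanceAs (Fintype (Option (Fin n × Fin n)))

namespace Brandt

/-- The zero element `ϑ` of `B_n`. -/
def theta (n : ℕ) : Brandt n := none

/-- The element `(i, j)` of `B_n`. -/
def pair {n : ℕ} (i j : Fin n) : Brandt n := some (i, j)

/-- The addition of the Brandt semigroup:
`(i,j) + (k,l) = (i,l)` if `j = k` and `ϑ` otherwise; `ϑ` is absorbing. -/
def add {n : ℕ} : Option (Fin n × Fin n) → Option (Fin n × Fin n) → Option (Fin n × Fin n)
  | some (i, j), some (k, l) => if j = k then some (i, l) else none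
  | _, _ => none

instance (n : ℕ) : Add (Brandt n) := ⟨fun a b => Brandt.add a b⟩

end Brandt

/-- `M(B_n)`: all self-maps of `B_n`, with pointwise addition. -/
abbrev MB (n : ℕ) := Brandt n → Brandt n

/-- `g` is an endomorphism of `(B_n, +)`. -/
def IsEndo {n : ℕ} (g : MB n) : Prop := ∀ a b : Brandt n, g (a + b) = g a + g b

/-- `g` is an automorphism of `(B_n, +)`. -/
def IsAuto {n : ℕ} (g : MB n) : Prop := IsEndo g ∧ Function.Bijective g

/-- The constant map `ξ_c` on `B_n` with value `c`. -/
def xi {n : ℕ} (c : Brandt n) : MB n := fun _ => c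

/-- `C_{B_n}`, the set of all constant maps on `B_n`. -/
def ConstMaps (n : ℕ) : Set (MB n) := {f | ∃ c : Brandt n, f = xi c}

/-- `f` is an affine map: a sum of an endomorphism and a constant map. -/
def IsAffine {n : ℕ} (f : MB n) : Prop := ∃ g c, IsEndo g ∧ f = g + xi c

/-- `A^+(B_n)`: the subsemigroup of `(M(B_n), +)` generated by the affine maps. -/
def Aplus (n : ℕ) : AddSubsemigroup (MB n) := AddSubsemigroup.closure {f | IsAffine f}

/-- `A^+(B_n)` as a set of maps. -/
def AplusSet (n : ℕ) : Set (MB n) := (Aplus n : Set (MB n))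

/-- The support of `f`: the set of elements not mapped to `ϑ`. -/
def supp {n : ℕ} (f : MB n) : Set (Brandt n) := {a | f a ≠ Brandt.theta n}

/-- `X_k`: the set of `k`-support elements of `X`. -/
def supportPart {n : ℕ} (X : Set (MB n)) (k : ℕ) : Set (MB n) :=
  {f ∈ X | (supp f).ncard = k}

/-- A subset `U` of an additive semigroup is independent if no element of `U`
lies in the subsemigroup generated by the remaining elements of `U`. -/
def IndepSet {β : Type*} [Add β] (U : Set β) : Prop :=
  ∀ a ∈ U, a ∉ AddSubsemigroup.closure (U \ {a})

/-- The `n`-support map `(p, q; σ)`, sending `(i, p)` to `(iσ, q)` and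
everything else to `ϑ`. -/
def nMap {n : ℕ} (p q : Fin n) (σ : Equiv.Perm (Fin n)) : MB n := fun a =>
  Option.elim (α := Fin n × Fin n) a (Brandt.theta n)
    (fun x => if x.2 = p then Brandt.pair (σ x.1) q else Brandt.theta n)

/-- The singleton support map `⟨(k, l), α⟩`, sending `(k, l)` to `α` and
everything else to `ϑ`. -/
def sMap {n : ℕ} (k l : Fin n) (α : Brandt n) : MB n :=
  fun a => if a = Brandt.pair k l then α else Brandt.theta n

/-- The set `S = {ξ_(i, i+1) : i ∈ [n-1]} ∪ {ξ_(n, 1)}`, i.e. the constant maps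
`ξ_(i, i+1)` where the successor is taken cyclically in `[n]`. -/
def setS (n : ℕ) : Set (MB n) := {f | ∃ i : Fin n, f = xi (Brandt.pair i (finRotate n i))}

/-- The set `T = {g + h : g ∈ Aut(B_n), h ∈ S}`. -/
def setT (n : ℕ) : Set (MB n) := {f | ∃ g h, IsAuto g ∧ h ∈ setS n ∧ f = g + h}
section Aux
open Brandt

variable {n : ℕ}

lemma theta_add (a : Brandt n) : theta n + a = theta n := rfl

lemma add_theta (a : Brandt n) : a + theta n = theta n := by
  cases a <;> rfl

lemma pair_add_pair (i j k l : Fin n) :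
    pair i j + pair k l = if j = k then pair i l else theta n := rfl

lemma xi_apply (c : Brandt n) (x : Brandt n) : xi c x = c := rfl

lemma mb_add_apply (f g : MB n) (x : Brandt n) : (f + g) x = f x + g x := rfl

lemma brandt_cases (a : Brandt n) : a = theta n ∨ ∃ i j, a = pair i j := by
  cases a with
  | none => exact Or.inl rfl
  | some x => exact Or.inr ⟨x.1, x.2, rfl⟩

lemma theta_ne_pair (i j : Fin n) : theta n ≠ pair i j := by
  intro h; cases h

lemma pair_ne_theta (i j : Fin n) : pair i j ≠ theta n := by
  intro h; cases h

lemma pair_inj {i j k l : Fin n} (h : pair i j = pair k l) : i = k ∧ j = l := by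
  have h' : (some (i, j) : Option (Fin n × Fin n)) = some (k, l) := h
  simpa [Prod.ext_iff] using h'

lemma nMap_theta (p q : Fin n) (σ : Equiv.Perm (Fin n)) :
    nMap p q σ (theta n) = theta n := rfl

lemma nMap_pair (p q : Fin n) (σ : Equiv.Perm (Fin n)) (i j : Fin n) :
    nMap p q σ (pair i j) = if j = p then pair (σ i) q else theta n := rfl

lemma sMap_apply (k l : Fin n) (α : Brandt n) (x : Brandt n) :
    sMap k l α x = if x = pair k l then α else theta n := rfl

lemma sMap_theta' (k l : Fin n) (α : Brandt n) :
    sMap k l α (theta n) = theta n := by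
  rw [sMap_apply, if_neg (theta_ne_pair k l)]

/-- If `f` vanishes off `pair k l` then `f` is an `sMap`. -/
lemma eq_sMap {f : MB n} (k l : Fin n)
    (h : ∀ x, x ≠ pair k l → f x = theta n) :
    f = sMap k l (f (pair k l)) := by
  funext x
  by_cases hx : x = pair k l
  · subst hx; rw [sMap_apply, if_pos rfl]
  · rw [sMap_apply, if_neg hx, h x hx]

lemma add_sMap (f : MB n) (k l : Fin n) (α : Brandt n) :
    f + sMap k l α = sMap k l (f (pair k l) + α) := by
  funext x
  by_cases hx : x = pair k l
  · subst hx; rw [mb_add_apply, sMap_apply, if_pos rfl, sMap_apply, if_pos rfl]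
  · rw [mb_add_apply, sMap_apply, if_neg hx, sMap_apply, if_neg hx, add_theta]

lemma sMap_add (f : MB n) (k l : Fin n) (α : Brandt n) :
    sMap k l α + f = sMap k l (α + f (pair k l)) := by
  funext x
  by_cases hx : x = pair k l
  · subst hx; rw [mb_add_apply, sMap_apply, if_pos rfl, sMap_apply, if_pos rfl]
  · rw [mb_add_apply, sMap_apply, if_neg hx, sMap_apply, if_neg hx, theta_add]

lemma add_xi_theta (f : MB n) : f + xi (theta n) = xi (theta n) :=
  funext fun x => add_theta (f x)

lemma xi_theta_add (f : MB n) : xi (theta n) + f = xi (theta n) :=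
  funext fun _ => rfl

lemma xi_add_xi (c d : Brandt n) : xi c + xi d = xi (c + d) := rfl

lemma nMap_add_xi (p q : Fin n) (σ : Equiv.Perm (Fin n)) (k l : Fin n) :
    nMap p q σ + xi (pair k l) = if q = k then nMap p l σ else xi (theta n) := by
  by_cases h : q = k <;> [rw [if_pos h]; rw [if_neg h]] <;> funext x <;>
    rcases brandt_cases x with rfl | ⟨i, j, rfl⟩ <;>
    simp only [mb_add_apply, nMap_theta, nMap_pair, xi_apply, theta_add] <;>
    by_cases hj : j = p <;>
    simp [hj, pair_add_pair, h, theta_add, add_theta]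

lemma xi_add_nMap (k l p q : Fin n) (σ : Equiv.Perm (Fin n)) :
    ∃ α, xi (pair k l) + nMap p q σ = sMap (σ.symm l) p α := by
  refine ⟨_, eq_sMap _ _ ?_⟩
  intro x hx
  rcases brandt_cases x with rfl | ⟨i, j, rfl⟩
  · rw [mb_add_apply, xi_apply, nMap_theta, add_theta]
  · rw [mb_add_apply, xi_apply, nMap_pair]
    by_cases hj : j = p
    · subst hj
      have hi : i ≠ σ.symm l := fun h => hx (by rw [h])
      have hl : l ≠ σ i := by
        intro h
        exact hi (by rw [h, Equiv.symm_apply_apply])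
      rw [if_pos rfl, pair_add_pair, if_neg hl]
    · rw [if_neg hj, add_theta]

lemma nMap_add_nMap (p q : Fin n) (σ : Equiv.Perm (Fin n))
    (p' q' : Fin n) (σ' : Equiv.Perm (Fin n)) :
    ∃ α, nMap p q σ + nMap p' q' σ' = sMap (σ'.symm q) p α := by
  refine ⟨_, eq_sMap _ _ ?_⟩
  intro x hx
  rcases brandt_cases x with rfl | ⟨i, j, rfl⟩
  · rw [mb_add_apply, nMap_theta, nMap_theta, theta_add]
  · rw [mb_add_apply, nMap_pair, nMap_pair]
    by_cases hj : j = p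
    · have hi : i ≠ σ'.symm q := fun h => hx (by rw [h, hj])
      rw [if_pos hj]
      by_cases hp' : j = p'
      · rw [if_pos hp']
        have hq : q ≠ σ' i := by
          intro h
          exact hi (by rw [h, Equiv.symm_apply_apply])
        rw [pair_add_pair, if_neg hq]
      · rw [if_neg hp', add_theta]
    · rw [if_neg hj, theta_add]

/-- Classification of endomorphisms of `B_n`: constants (at idempotents) or
permutation-induced automorphisms. -/
lemma endo_classify {g : MB n} (hg : IsEndo g) :
    (∃ d, g = xi d) ∨
      ∃ σ : Equiv.Perm (Fin n),
        g (theta n) = theta n ∧ ∀ i j, g (pair i j) = pair (σ i) (σ j) := by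
  have h0 : g (theta n) = g (theta n) + g (theta n) := by
    have := hg (theta n) (theta n)
    rwa [theta_add] at this
  rcases brandt_cases (g (theta n)) with hθ | ⟨e, e', hθ⟩
  · -- g θ = θ
    by_cases hz : ∃ i, g (pair i i) = theta n
    · -- g is the constant θ
      obtain ⟨i, hi⟩ := hz
      left
      refine ⟨theta n, funext fun a => ?_⟩
      rcases brandt_cases a with rfl | ⟨j, k, ha⟩
      · rw [hθ]; rfl
      · subst ha
        have hsum : pair j k = pair j i + (pair i i + pair i k) := by
          rw [pair_add_pair, if_pos rfl, pair_add_pair, if_pos rfl]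
        rw [hsum, hg, hg, hi, theta_add, add_theta]; rfl
    · push_neg at hz
      have h1 : ∀ i, ∃ u, g (pair i i) = pair u u := by
        intro i
        rcases brandt_cases (g (pair i i)) with h | ⟨x, y, h⟩
        · exact absurd h (hz i)
        · have h2 : g (pair i i) = g (pair i i) + g (pair i i) := by
            have := hg (pair i i) (pair i i)
            rwa [pair_add_pair, if_pos rfl] at this
          rw [h, pair_add_pair] at h2
          by_cases hyx : y = x
          · rw [hyx] at h
            exact ⟨x, h⟩
          · rw [if_neg hyx] at h2
            exact absurd h2 (pair_ne_theta x y)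
      choose u hu using h1
      have huinj : Function.Injective u := by
        intro i j hij
        by_contra hne
        have hij' : (i : Fin n) ≠ j := fun h => hne (by rw [h])
        have := hg (pair i i) (pair j j)
        rw [pair_add_pair, if_neg hij', hθ, hu, hu, pair_add_pair, if_pos hij] at this
        exact theta_ne_pair _ _ this
      have hbij : Function.Bijective u := Finite.injective_iff_bijective.mp huinj
      set σ : Equiv.Perm (Fin n) := Equiv.ofBijective u hbij with hσ
      have hσu : ∀ i, σ i = u i := fun i => rfl
      right
      refine ⟨σ, hθ, fun i j => ?_⟩
      have hne : g (pair i j) ≠ theta n := by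
        intro h
        have := hg (pair i j) (pair j i)
        rw [pair_add_pair, if_pos rfl, h, theta_add, hu] at this
        exact pair_ne_theta _ _ this
      rcases brandt_cases (g (pair i j)) with h | ⟨x, y, h⟩
      · exact absurd h hne
      · have hl : g (pair i j) = g (pair i i) + g (pair i j) := by
          have := hg (pair i i) (pair i j)
          rwa [pair_add_pair, if_pos rfl] at this
        rw [h, hu, pair_add_pair] at hl
        have hxui : u i = x := by
          by_contra hx
          rw [if_neg hx] at hl
          exact pair_ne_theta _ _ hl
        have hr : g (pair i j) = g (pair i j) + g (pair j j) := by
          have := hg (pair i j) (pair j j)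
          rwa [pair_add_pair, if_pos rfl] at this
        rw [h, hu, pair_add_pair] at hr
        have hyuj : y = u j := by
          by_contra hy
          rw [if_neg hy] at hr
          exact pair_ne_theta _ _ hr
        rw [h, hσu, hσu, hxui, ← hyuj]
  · -- g θ = (e, e')
    rw [hθ, pair_add_pair] at h0
    have hee : e' = e := by
      by_contra he
      rw [if_neg he] at h0
      exact pair_ne_theta _ _ h0
    rw [hee] at hθ
    left
    refine ⟨pair e e, funext fun a => ?_⟩
    have h1 : pair e e + g a = pair e e := by
      have := hg (theta n) a
      rw [theta_add, hθ] at this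
      exact this.symm
    rcases brandt_cases (g a) with h | ⟨x, y, h⟩
    · rw [h, add_theta] at h1
      exact absurd h1 (theta_ne_pair _ _)
    · rw [h, pair_add_pair] at h1
      by_cases hex : e = x
      · rw [if_pos hex] at h1
        have hy := (pair_inj h1).2
        rw [xi_apply, h, ← hex, hy]
      · rw [if_neg hex] at h1
        exact absurd h1 (theta_ne_pair _ _)

/-- The invariant set `W`: constants, `n`-support maps, and small maps. -/
def InW {n : ℕ} (f : MB n) : Prop :=
  (∃ c, f = xi c) ∨ (∃ p q σ, f = nMap p q σ) ∨ (∃ k l α, f = sMap k l α)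

lemma affine_inW {f : MB n} (hf : IsAffine f) : InW f := by
  obtain ⟨g, c, hg, rfl⟩ := hf
  rcases endo_classify hg with ⟨d, rfl⟩ | ⟨σ, hθ, hp⟩
  · exact Or.inl ⟨d + c, rfl⟩
  · rcases brandt_cases c with rfl | ⟨k, l, rfl⟩
    · exact Or.inl ⟨theta n, add_xi_theta g⟩
    · refine Or.inr (Or.inl ⟨σ.symm k, l, σ, funext fun x => ?_⟩)
      rcases brandt_cases x with rfl | ⟨i, j, rfl⟩
      · rw [mb_add_apply, hθ, xi_apply, theta_add, nMap_theta]
      · rw [mb_add_apply, hp, xi_apply, pair_add_pair, nMap_pair]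
        by_cases hj : j = σ.symm k
        · rw [if_pos hj, if_pos (by rw [hj, Equiv.apply_symm_apply])]
        · rw [if_neg hj, if_neg (fun h => hj (by rw [← h, Equiv.symm_apply_apply]))]

lemma inW_add {f g : MB n} (hn : 2 ≤ n) (hf : InW f) (hg : InW g) : InW (f + g) := by
  have i0 : Fin n := ⟨0, by omega⟩
  rcases hg with ⟨c, rfl⟩ | ⟨p, q, σ, rfl⟩ | ⟨k, l, α, rfl⟩
  · -- g constant
    rcases brandt_cases c with rfl | ⟨k, l, rfl⟩
    · exact Or.inl ⟨theta n, add_xi_theta f⟩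
    · rcases hf with ⟨c', rfl⟩ | ⟨p, q, σ, rfl⟩ | ⟨k', l', α, rfl⟩
      · exact Or.inl ⟨c' + pair k l, rfl⟩
      · rw [nMap_add_xi]
        by_cases h : q = k
        · rw [if_pos h]; exact Or.inr (Or.inl ⟨p, l, σ, rfl⟩)
        · rw [if_neg h]; exact Or.inl ⟨theta n, rfl⟩
      · rw [sMap_add]; exact Or.inr (Or.inr ⟨k', l', _, rfl⟩)
  · -- g nMap
    rcases hf with ⟨c, rfl⟩ | ⟨p', q', σ', rfl⟩ | ⟨k', l', α, rfl⟩
    · rcases brandt_cases c with rfl | ⟨k, l, rfl⟩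
      · exact Or.inl ⟨theta n, xi_theta_add _⟩
      · obtain ⟨α, hα⟩ := xi_add_nMap k l p q σ
        exact Or.inr (Or.inr ⟨_, _, α, hα⟩)
    · obtain ⟨α, hα⟩ := nMap_add_nMap p' q' σ' p q σ
      exact Or.inr (Or.inr ⟨_, _, α, hα⟩)
    · rw [sMap_add]; exact Or.inr (Or.inr ⟨k', l', _, rfl⟩)
  · rw [add_sMap]; exact Or.inr (Or.inr ⟨k, l, _, rfl⟩)

lemma aplus_inW {f : MB n} (hn : 2 ≤ n) (hf : f ∈ AplusSet n) : InW f := by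
  refine AddSubsemigroup.closure_induction (p := fun g _ => InW g)
    (fun x h => affine_inW h) (fun x y _ _ hx hy => inW_add hn hx hy) hf

end Aux

section Aux2
open Brandt

variable {n : ℕ}

lemma supp_xi_theta : supp (xi (theta n)) = (∅ : Set (Brandt n)) := by
  ext x; simp [supp, xi_apply]

lemma supp_xi_pair (i j : Fin n) : supp (xi (pair i j)) = Set.univ := by
  ext x
  simp only [supp, Set.mem_setOf_eq, Set.mem_univ, iff_true, xi_apply]
  exact fun h => pair_ne_theta i j h

lemma supp_sMap (k l : Fin n) (α : Brandt n) :
    supp (sMap k l α) ⊆ {pair k l} := by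
  intro x hx
  by_contra h
  have h' : x ≠ pair k l := fun he => h (by simp [he])
  exact hx (by rw [sMap_apply, if_neg h'])

lemma supp_nMap (p q : Fin n) (σ : Equiv.Perm (Fin n)) :
    supp (nMap p q σ) = Set.range (fun i : Fin n => pair i p) := by
  ext x
  simp only [supp, Set.mem_setOf_eq, Set.mem_range]
  constructor
  · intro hx
    rcases brandt_cases x with rfl | ⟨i, j, rfl⟩
    · exact absurd (nMap_theta p q σ) hx
    · rw [nMap_pair] at hx
      by_cases hj : j = p
      · exact ⟨i, by rw [hj]⟩
      · exact absurd (if_neg hj) hx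
  · rintro ⟨i, rfl⟩
    rw [nMap_pair, if_pos rfl]
    exact fun h => pair_ne_theta _ _ h

lemma card_brandt : Nat.card (Brandt n) = n * n + 1 := by
  have : Nat.card (Option (Fin n × Fin n)) = n * n + 1 := by
    simp [Nat.card_eq_fintype_card]
  exact this

lemma ncard_supp_xi_pair (i j : Fin n) : (supp (xi (pair i j))).ncard = n * n + 1 := by
  rw [supp_xi_pair, Set.ncard_univ, card_brandt]

lemma pair_left_inj (p : Fin n) : Function.Injective (fun i : Fin n => pair i p) :=
  fun i j h => (pair_inj h).1

lemma ncard_supp_nMap (p q : Fin n) (σ : Equiv.Perm (Fin n)) :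
    (supp (nMap p q σ)).ncard = n := by
  rw [supp_nMap, ← Set.image_univ, Set.ncard_image_of_injective _ (pair_left_inj p),
    Set.ncard_univ, Nat.card_eq_fintype_card, Fintype.card_fin]

lemma ncard_supp_sMap_le (k l : Fin n) (α : Brandt n) :
    (supp (sMap k l α)).ncard ≤ 1 := by
  have := Set.ncard_le_ncard (supp_sMap k l α) (Set.finite_singleton _)
  simpa using this

/-- `nMap` is injective in its parameters. -/
lemma nMap_param_inj {p q : Fin n} {σ : Equiv.Perm (Fin n)} {p' q' : Fin n}
    {σ' : Equiv.Perm (Fin n)} (h : nMap p q σ = nMap p' q' σ') :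
    p = p' ∧ q = q' ∧ σ = σ' := by
  have hp : p = p' := by
    by_contra hpp
    have := congrFun h (pair p p)
    rw [nMap_pair, nMap_pair, if_pos rfl, if_neg hpp] at this
    exact pair_ne_theta _ _ this
  subst hp
  have hiq : ∀ i : Fin n, pair (σ i) q = pair (σ' i) q' := by
    intro i
    have := congrFun h (pair i p)
    rwa [nMap_pair, nMap_pair, if_pos rfl, if_pos rfl] at this
  refine ⟨rfl, ?_, ?_⟩
  · exact (pair_inj (hiq (σ.symm q))).2
  · exact Equiv.ext fun i => (pair_inj (hiq i)).1

/-- The permutation-induced endomorphism. -/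
def autoMap {n : ℕ} (σ : Equiv.Perm (Fin n)) : MB n := fun a =>
  Option.elim (α := Fin n × Fin n) a (theta n) (fun x => pair (σ x.1) (σ x.2))

lemma autoMap_theta (σ : Equiv.Perm (Fin n)) : autoMap σ (theta n) = theta n := rfl
lemma autoMap_pair (σ : Equiv.Perm (Fin n)) (i j : Fin n) :
    autoMap σ (pair i j) = pair (σ i) (σ j) := rfl

lemma isEndo_autoMap (σ : Equiv.Perm (Fin n)) : IsEndo (autoMap σ) := by
  intro a b
  rcases brandt_cases a with rfl | ⟨i, j, rfl⟩
  · rw [theta_add, autoMap_theta, theta_add]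
  · rcases brandt_cases b with rfl | ⟨k, l, rfl⟩
    · rw [add_theta, autoMap_theta, add_theta]
    · rw [pair_add_pair, autoMap_pair, autoMap_pair, pair_add_pair]
      by_cases hjk : j = k
      · rw [if_pos hjk, if_pos (by rw [hjk]), autoMap_pair]
      · rw [if_neg hjk, if_neg (fun h => hjk (σ.injective h)), autoMap_theta]

lemma isAffine_nMap (p q : Fin n) (σ : Equiv.Perm (Fin n)) : IsAffine (nMap p q σ) := by
  refine ⟨autoMap σ, pair (σ p) q, isEndo_autoMap σ, funext fun x => ?_⟩
  rcases brandt_cases x with rfl | ⟨i, j, rfl⟩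
  · rw [nMap_theta, mb_add_apply, autoMap_theta, xi_apply, theta_add]
  · rw [nMap_pair, mb_add_apply, autoMap_pair, xi_apply, pair_add_pair]
    by_cases hj : j = p
    · rw [if_pos hj, if_pos (by rw [hj])]
    · rw [if_neg hj, if_neg (fun h => hj (σ.injective h))]

lemma isAffine_xi_diag (i : Fin n) : IsAffine (xi (pair i i)) := by
  refine ⟨xi (pair i i), pair i i, ?_, funext fun x => ?_⟩
  · intro a b
    rw [xi_apply, xi_apply, xi_apply, pair_add_pair, if_pos rfl]
  · show pair i i = pair i i + pair i i
    rw [pair_add_pair, if_pos rfl]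

lemma nMap_mem_aplus (p q : Fin n) (σ : Equiv.Perm (Fin n)) : nMap p q σ ∈ AplusSet n :=
  AddSubsemigroup.subset_closure (isAffine_nMap p q σ)

lemma xi_diag_mem_aplus (i : Fin n) : xi (pair i i) ∈ AplusSet n :=
  AddSubsemigroup.subset_closure (isAffine_xi_diag i)

/-- The `n`-support part of `A⁺(Bₙ)` is exactly the set of `nMap`s. -/
lemma supportPart_eq (hn : 2 ≤ n) :
    supportPart (AplusSet n) n = {f : MB n | ∃ p q σ, f = nMap p q σ} := by
  ext f
  constructor
  · rintro ⟨hf, hcard⟩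
    rcases aplus_inW hn hf with ⟨c, rfl⟩ | h | ⟨k, l, α, rfl⟩
    · rcases brandt_cases c with rfl | ⟨i, j, rfl⟩
      · rw [supp_xi_theta] at hcard
        simp at hcard
        omega
      · rw [ncard_supp_xi_pair] at hcard
        nlinarith
    · exact h
    · have := ncard_supp_sMap_le k l α
      omega
  · rintro ⟨p, q, σ, rfl⟩
    exact ⟨nMap_mem_aplus p q σ, ncard_supp_nMap p q σ⟩

lemma nMap_ne_xi_pair (p q : Fin n) (σ : Equiv.Perm (Fin n)) (c d : Fin n) :
    nMap p q σ ≠ xi (pair c d) := by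
  intro h
  have := congrFun h (theta n)
  rw [nMap_theta, xi_apply] at this
  exact theta_ne_pair _ _ this

def fin0 {n : ℕ} (hn : 2 ≤ n) : Fin n := ⟨0, by omega⟩
def fin1 {n : ℕ} (hn : 2 ≤ n) : Fin n := ⟨1, by omega⟩

lemma nMap_ne_xi_theta (hn : 2 ≤ n) (p q : Fin n) (σ : Equiv.Perm (Fin n)) :
    nMap p q σ ≠ xi (theta n) := by
  intro h
  have := congrFun h (pair (fin0 hn) p)
  rw [nMap_pair, if_pos rfl, xi_apply] at this
  exact pair_ne_theta _ _ this

lemma sMap_ne_nMap (hn : 2 ≤ n) (k l : Fin n) (α : Brandt n)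
    (p q : Fin n) (σ : Equiv.Perm (Fin n)) : sMap k l α ≠ nMap p q σ := by
  intro h
  have h0 := congrFun h (pair (fin0 hn) p)
  have h1 := congrFun h (pair (fin1 hn) p)
  rw [nMap_pair, if_pos rfl, sMap_apply] at h0
  rw [nMap_pair, if_pos rfl, sMap_apply] at h1
  by_cases e0 : pair (fin0 hn) p = pair k l
  · by_cases e1 : pair (fin1 hn) p = pair k l
    · have : (fin0 hn) = (fin1 hn) := (pair_inj (e0.trans e1.symm)).1
      have : (0 : ℕ) = 1 := congrArg Fin.val this
      omega
    · rw [if_neg e1] at h1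
      exact theta_ne_pair _ _ h1
  · rw [if_neg e0] at h0
    exact theta_ne_pair _ _ h0

lemma sMap_ne_xi_pair (k l : Fin n) (α : Brandt n) (c d : Fin n) :
    sMap k l α ≠ xi (pair c d) := by
  intro h
  have := congrFun h (theta n)
  rw [sMap_theta', xi_apply] at this
  exact theta_ne_pair _ _ this

lemma xi_pair_injective {c d c' d' : Fin n} (h : xi (pair c d) = xi (pair c' d')) :
    c = c' ∧ d = d' :=
  pair_inj (congrFun h (theta n))

end Aux2

section Aux3
open Brandt

variable {n : ℕ}

/-- The inductive invariant for independence: elements of the closure of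
`I \ {a}` are `ξ_ϑ`, diagonal constants other than `a`, `nMap`s other
than `a`, or small maps. -/
def GoodP {n : ℕ} (a f : MB n) : Prop :=
  f = xi (theta n) ∨ (∃ j, f = xi (pair j j) ∧ f ≠ a) ∨
    (∃ p q σ, f = nMap p q σ ∧ f ≠ a) ∨ (∃ k l α, f = sMap k l α)

lemma goodP_add {a f g : MB n} (hf : GoodP a f) (hg : GoodP a g) :
    GoodP a (f + g) := by
  rcases hf with rfl | ⟨j, rfl, hfa⟩ | ⟨p, q, σ, rfl, hfa⟩ | ⟨k, l, α, rfl⟩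
  · rw [xi_theta_add]; exact Or.inl rfl
  · -- f = ξ(j,j)
    rcases hg with rfl | ⟨k, rfl, _⟩ | ⟨p, q, σ, rfl, _⟩ | ⟨k, l, α, rfl⟩
    · rw [add_xi_theta]; exact Or.inl rfl
    · rw [xi_add_xi, pair_add_pair]
      by_cases hjk : j = k
      · rw [if_pos hjk, ← hjk]
        exact Or.inr (Or.inl ⟨j, rfl, hfa⟩)
      · rw [if_neg hjk]; exact Or.inl rfl
    · obtain ⟨α, hα⟩ := xi_add_nMap j j p q σ
      exact Or.inr (Or.inr (Or.inr ⟨_, _, α, hα⟩))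
    · rw [add_sMap]; exact Or.inr (Or.inr (Or.inr ⟨k, l, _, rfl⟩))
  · -- f = nMap p q σ
    rcases hg with rfl | ⟨k, rfl, _⟩ | ⟨p', q', σ', rfl, _⟩ | ⟨k, l, α, rfl⟩
    · rw [add_xi_theta]; exact Or.inl rfl
    · rw [nMap_add_xi]
      by_cases hqk : q = k
      · rw [if_pos hqk, ← hqk]
        exact Or.inr (Or.inr (Or.inl ⟨p, q, σ, rfl, hfa⟩))
      · rw [if_neg hqk]; exact Or.inl rfl
    · obtain ⟨α, hα⟩ := nMap_add_nMap p q σ p' q' σ'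
      exact Or.inr (Or.inr (Or.inr ⟨_, _, α, hα⟩))
    · rw [add_sMap]; exact Or.inr (Or.inr (Or.inr ⟨k, l, _, rfl⟩))
  · rw [sMap_add]; exact Or.inr (Or.inr (Or.inr ⟨k, l, _, rfl⟩))

lemma xi_diag_ne_xi_theta (i : Fin n) : xi (pair i i) ≠ xi (theta n) := by
  intro h
  exact pair_ne_theta _ _ (congrFun h (theta n))

lemma not_goodP_self (hn : 2 ≤ n) (a : MB n)
    (ha : (∃ p q σ, a = nMap p q σ) ∨ ∃ i, a = xi (pair i i)) :
    ¬ GoodP a a := by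
  rintro (h | ⟨j, _, hne⟩ | ⟨p, q, σ, _, hne⟩ | ⟨k, l, α, h⟩)
  · rcases ha with ⟨p, q, σ, rfl⟩ | ⟨i, rfl⟩
    · exact nMap_ne_xi_theta hn p q σ h
    · exact xi_diag_ne_xi_theta i h
  · exact hne rfl
  · exact hne rfl
  · rcases ha with ⟨p, q, σ, rfl⟩ | ⟨i, rfl⟩
    · exact sMap_ne_nMap hn k l α p q σ h.symm
    · exact sMap_ne_xi_pair k l α i i h.symm

/-- The distinguished independent set. -/
def setJ (n : ℕ) : Set (MB n) :=
  supportPart (AplusSet n) n ∪ {f | ∃ i : Fin n, f = xi (Brandt.pair i i)}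

lemma setJ_subset (hn : 2 ≤ n) : setJ n ⊆ AplusSet n := by
  rintro f (hf | ⟨i, rfl⟩)
  · exact hf.1
  · exact xi_diag_mem_aplus i

lemma setJ_indep (hn : 2 ≤ n) : IndepSet (setJ n) := by
  intro a ha hmem
  have haI : (∃ p q σ, a = nMap p q σ) ∨ ∃ i, a = xi (pair i i) := by
    rcases ha with h | ⟨i, hi⟩
    · rw [supportPart_eq hn] at h
      exact Or.inl h
    · exact Or.inr ⟨i, hi⟩
  have hgen : ∀ f ∈ setJ n \ {a}, GoodP a f := by
    rintro f ⟨hf, hfa⟩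
    have hfa' : f ≠ a := fun h => hfa (by simp [h])
    rcases hf with h | ⟨i, rfl⟩
    · rw [supportPart_eq hn] at h
      obtain ⟨p, q, σ, rfl⟩ := h
      exact Or.inr (Or.inr (Or.inl ⟨p, q, σ, rfl, hfa'⟩))
    · exact Or.inr (Or.inl ⟨i, rfl, hfa'⟩)
  have : GoodP a a :=
    AddSubsemigroup.closure_induction (p := fun f _ => GoodP a f)
      (fun x h => hgen x h) (fun x y _ _ hx hy => goodP_add hx hy) hmem
  exact not_goodP_self hn a haI this

/-- Enumeration of `setJ`. -/
def eFun (n : ℕ) : (Fin n × Fin n × Equiv.Perm (Fin n)) ⊕ Fin n → MB n :=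
  Sum.elim (fun x => nMap x.1 x.2.1 x.2.2) (fun i => xi (pair i i))

lemma eFun_injective : Function.Injective (eFun n) := by
  rintro (⟨p, q, σ⟩ | i) (⟨p', q', σ'⟩ | j) h
  · obtain ⟨h1, h2, h3⟩ := nMap_param_inj h
    simp only at h1 h2 h3
    simp [h1, h2, h3]
  · exact absurd h (nMap_ne_xi_pair p q σ j j)
  · exact absurd h.symm (nMap_ne_xi_pair p' q' σ' i i)
  · obtain ⟨h1, -⟩ := xi_pair_injective h
    simp [h1]

lemma setJ_eq_range (hn : 2 ≤ n) : setJ n = Set.range (eFun n) := by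
  ext f
  constructor
  · rintro (hf | ⟨i, rfl⟩)
    · rw [supportPart_eq hn] at hf
      obtain ⟨p, q, σ, rfl⟩ := hf
      exact ⟨Sum.inl (p, q, σ), rfl⟩
    · exact ⟨Sum.inr i, rfl⟩
  · rintro ⟨(⟨p, q, σ⟩ | i), rfl⟩
    · exact Or.inl (by rw [supportPart_eq hn]; exact ⟨p, q, σ, rfl⟩)
    · exact Or.inr ⟨i, rfl⟩

lemma setJ_ncard (hn : 2 ≤ n) : (setJ n).ncard = n.factorial * n ^ 2 + n := by
  rw [setJ_eq_range hn, ← Set.image_univ,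
    Set.ncard_image_of_injective _ eFun_injective, Set.ncard_univ,
    Nat.card_eq_fintype_card]
  simp only [Fintype.card_sum, Fintype.card_prod, Fintype.card_perm, Fintype.card_fin]
  ring

end Aux3


/-- For `n ≥ 2`, the set `I = A⁺(Bₙ)ₙ ∪ {ξ_(i,i) : i ∈ [n]}`
is an independent subset of `A⁺(Bₙ)`; consequently
`r₄(A⁺(Bₙ)) ≥ (n!)·n² + n`. -/
theorem stmt_11 (n : ℕ) (hn : 2 ≤ n) :
    ∀ I : Set (MB n),
      I = supportPart (AplusSet n) n ∪ {f | ∃ i : Fin n, f = xi (Brandt.pair i i)} →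
      (I ⊆ AplusSet n ∧ IndepSet I) ∧
      ∃ m ∈ {m : ℕ | ∃ U : Set (MB n), U ⊆ AplusSet n ∧ IndepSet U ∧ U.ncard = m},
        n.factorial * n ^ 2 + n ≤ m := by
  intro I hI
  have hJ : I = setJ n := hI
  subst hJ
  refine ⟨⟨setJ_subset hn, setJ_indep hn⟩,
    ⟨n.factorial * n ^ 2 + n,
      ⟨setJ n, setJ_subset hn, setJ_indep hn, setJ_ncard hn⟩, le_refl _⟩⟩
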